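/- arXiv:0707.4628 — 2 statements merged into one kernel-verified Lean document; each statement's English description precedes it below -/
import Mathlib

section
/- For the shift on N = 2l+1 symbols (N odd, with the pattern in S_{N+2}), the spiralling pattern π = [2l+1, 2l-1, ..., 3, 1, 0, 2, ..., 2l, 2l+2] of length N+2 = 2l+3 is forbidden: no point ω of the one-sided shift space on N symbols satisfies Σ^{π₀}ω < Σ^{π₁}ω < ... < Σ^{π_{N+1}}ω. -/
/-- The one-sided shift map on sequences over `Fin N`. -/
def oshift {N : ℕ} (ω : ℕ → Fin N) : ℕ → Fin N := fun n => ω (n + 1)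

/-- Lexicographic strict order on one-sided sequences. -/
def lexLt {N : ℕ} (ω ω' : ℕ → Fin N) : Prop :=
  ∃ n, (∀ k, k < n → ω k = ω' k) ∧ ω n < ω' n

lemma oshift_iter {N : ℕ} (k : ℕ) (ω : ℕ → Fin N) (n : ℕ) :
    (oshift^[k] ω) n = ω (n + k) := by
  induction k generalizing ω with
  | zero => rfl
  | succ m ih =>
      rw [Function.iterate_succ_apply, ih (oshift ω)]
      rfl

lemma lexLt_asymm {N : ℕ} {a b : ℕ → Fin N} (h1 : lexLt a b) (h2 : lexLt b a) : False := by
  obtain ⟨n, hn, hns⟩ := h1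
  obtain ⟨m, hm, hms⟩ := h2
  rcases lt_trichotomy n m with h | h | h
  · exact absurd (hns.trans_le (le_of_eq (hm n h))) (lt_irrefl _)
  · subst h
    exact absurd (hns.trans hms) (lt_irrefl _)
  · exact absurd (hms.trans_le (le_of_eq (hn m h))) (lt_irrefl _)

lemma lexLt_head_le {N : ℕ} {a b : ℕ → Fin N} (h : lexLt a b) : a 0 ≤ b 0 := by
  obtain ⟨n, hn, hns⟩ := h
  cases n with
  | zero => exact le_of_lt hns
  | succ m => exact le_of_eq (hn 0 (Nat.succ_pos m))

lemma lexLt_tail {N : ℕ} {a b : ℕ → Fin N} (h : lexLt a b) (h0 : a 0 = b 0) :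
    lexLt (oshift a) (oshift b) := by
  obtain ⟨n, hn, hns⟩ := h
  cases n with
  | zero => exact absurd hns (by rw [h0]; exact lt_irrefl _)
  | succ m =>
      refine ⟨m, fun k hk => ?_, ?_⟩
      · exact hn (k + 1) (by omega)
      · exact hns

/-- For the one-sided shift on `N = 2l+1` symbols, the spiralling pattern
`π = [2l+1, 2l-1, ..., 3, 1, 0, 2, ..., 2l, 2l+2]` of length `N+2 = 2l+3`
is forbidden: no point realizes it. -/
theorem spiralling_forbidden_odd (l : ℕ) (hl : 1 ≤ l) (p : ℕ → ℕ)
    (hp₁ : ∀ i, i ≤ l → p i = 2 * l + 1 - 2 * i)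
    (hp₂ : ∀ j, j ≤ l + 1 → p (l + 1 + j) = 2 * j) :
    ¬ ∃ ω : ℕ → Fin (2 * l + 1), ∀ i j : ℕ, i < j → j ≤ 2 * l + 2 →
        lexLt (oshift^[p i] ω) (oshift^[p j] ω) := by
  rintro ⟨ω, hω⟩
  have head : ∀ a b : ℕ, lexLt (oshift^[a] ω) (oshift^[b] ω) → ω a ≤ ω b := by
    intro a b h
    have := lexLt_head_le h
    rwa [oshift_iter, oshift_iter, Nat.zero_add, Nat.zero_add] at this
  have tail : ∀ a b : ℕ, lexLt (oshift^[a] ω) (oshift^[b] ω) → ω a = ω b →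
      lexLt (oshift^[a + 1] ω) (oshift^[b + 1] ω) := by
    intro a b h he
    have h0 : (oshift^[a] ω) 0 = (oshift^[b] ω) 0 := by
      rw [oshift_iter, oshift_iter, Nat.zero_add, Nat.zero_add]; exact he
    have := lexLt_tail h h0
    rw [Function.iterate_succ_apply', Function.iterate_succ_apply']
    exact this
  -- every consecutive pair in the pattern is strict on first symbols
  have hstep : ∀ i, i ≤ 2 * l → ω (p i) < ω (p (i + 1)) := by
    intro i hi
    have h1 := hω i (i + 1) (by omega) (by omega)
    have hle := head _ _ h1
    by_contra hlt
    have he : ω (p i) = ω (p (i + 1)) := le_antisymm hle (not_lt.1 hlt)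
    have h2 := tail _ _ h1 he
    obtain ⟨i', j', hij, hj, ha, hb⟩ :
        ∃ i' j', i' < j' ∧ j' ≤ 2 * l + 2 ∧ p i' = p (i + 1) + 1 ∧ p j' = p i + 1 := by
      by_cases hc1 : i + 1 ≤ l
      · -- odd pair (2l+1-2i, 2l-1-2i)
        refine ⟨2 * l + 1 - i, 2 * l + 2 - i, by omega, by omega, ?_, ?_⟩
        · have h3 := hp₂ (l - i) (by omega)
          have e : l + 1 + (l - i) = 2 * l + 1 - i := by omega
          rw [e] at h3
          rw [h3, hp₁ (i + 1) hc1]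
          omega
        · have h3 := hp₂ (l + 1 - i) (by omega)
          have e : l + 1 + (l + 1 - i) = 2 * l + 2 - i := by omega
          rw [e] at h3
          rw [h3, hp₁ i (by omega)]
          omega
      by_cases hc2 : i = l
      · -- pair (1, 0)
        rw [hc2]
        refine ⟨l, l + 2, by omega, by omega, ?_, ?_⟩
        · have h3 := hp₂ 0 (by omega)
          have h4 := hp₁ l le_rfl
          have e : l + 1 + 0 = l + 1 := by omega
          rw [e] at h3
          rw [h4, h3]
          omega
        · have h3 := hp₂ 1 (by omega)
          have h4 := hp₁ l le_rfl
          have e : l + 1 + 1 = l + 2 := by omega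
          rw [e] at h3
          rw [h3, h4]
          omega
      by_cases hc3 : i = l + 1
      · -- pair (0, 2)
        rw [hc3]
        refine ⟨l - 1, l, by omega, by omega, ?_, ?_⟩
        · have h3 := hp₂ 1 (by omega)
          have e : l + 1 + 1 = l + 1 + 1 := rfl
          rw [hp₁ (l - 1) (by omega), h3]
          omega
        · have h3 := hp₂ 0 (by omega)
          have e : l + 1 + 0 = l + 1 := by omega
          rw [e] at h3
          rw [hp₁ l le_rfl, h3]
          omega
      · -- even pair (2j, 2j+2) with 1 ≤ j ≤ l-1
        have hj1 : l + 2 ≤ i := by omega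
        set j := i - (l + 1) with hjdef
        have hj2 : 1 ≤ j ∧ j ≤ l - 1 := by omega
        refine ⟨l - j - 1, l - j, by omega, by omega, ?_, ?_⟩
        · have h3 := hp₂ (j + 1) (by omega)
          have e : l + 1 + (j + 1) = i + 1 := by omega
          rw [e] at h3
          rw [hp₁ (l - j - 1) (by omega), h3]
          omega
        · have h3 := hp₂ j (by omega)
          have e : l + 1 + j = i := by omega
          rw [e] at h3
          rw [hp₁ (l - j) (by omega), h3]
          omega
    have h3 := hω i' j' hij hj
    rw [ha, hb] at h3
    exact lexLt_asymm h2 h3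
  have mono : ∀ i, i ≤ 2 * l + 1 → (ω (p 0)).val + i ≤ (ω (p i)).val := by
    intro i
    induction i with
    | zero => intro _; omega
    | succ m ih =>
        intro h
        have h1 := ih (by omega)
        have h2 := hstep m (by omega)
        have h3 : (ω (p m)).val < (ω (p (m + 1))).val := h2
        omega
  have h1 := mono (2 * l + 1) le_rfl
  have h2 := (ω (p (2 * l + 1))).isLt
  omega
end

section
/- The two-sided shift on N ≥ 2 symbols realizes every order pattern realized by the one-sided shift on N symbols; in particular, the two-sided shift on N symbols has no forbidden patterns of length L ≤ N+1. -/
/-- The two-sided shift map. -/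
def tshift {N : ℕ} (ω : ℤ → Fin N) : ℤ → Fin N := fun n => ω (n + 1)

/-- The right one-sided sequence of a bisequence. -/
def rightSeq {N : ℕ} (ω : ℤ → Fin N) : ℕ → Fin N := fun n => ω n

/-- The left one-sided sequence of a bisequence. -/
def leftSeq {N : ℕ} (ω : ℤ → Fin N) : ℕ → Fin N := fun n => ω (-(n + 1 : ℕ))

/-- The order on bisequences: compare right sequences lexicographically,
breaking ties by the left sequences. -/
def biLt {N : ℕ} (ω ω' : ℤ → Fin N) : Prop :=
  lexLt (rightSeq ω) (rightSeq ω') ∨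
    (rightSeq ω = rightSeq ω' ∧ lexLt (leftSeq ω) (leftSeq ω'))


/-!
Extending a one-sided sequence to the left (by composing with `Int.toNat`) leaves all its right
sequences unchanged, so one-sided realizations are two-sided ones, and it remains to realize every
pattern of length `L ≤ N + 1` by the one-sided shift.

Let `σ` send the rank of a time `k` in the pattern to the rank of `k + 1 mod L`, and give rank `r`
the letter "number of descents of `σ` below `r`"; read along the `L`-periodic sequence of ranks this
is a sequence on `N` symbols. Letters are monotone in the rank, and two ranks with the same letter
have no descent between them, so `σ` preserves their order. Hence the order of two ranks is
preserved as long as their itineraries agree, and the first disagreement has the right sign; one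
occurs because `σ` is a single cycle on a finite set. Of the `L - 1` adjacent pairs of ranks not
all are descents when `L ≥ 3`, since an order-reversing `σ` would be an involution, so `N` letters
suffice.
-/

open Finset Function Fin.NatCast

lemma oshift_iterate_apply {N : ℕ} (ω : ℕ → Fin N) (m n : ℕ) :
    (oshift^[m] ω) n = ω (n + m) := by
  induction m generalizing ω with
  | zero => rfl
  | succ m ih => rw [iterate_succ_apply, ih]; rfl

lemma tshift_iterate_apply {N : ℕ} (ω : ℤ → Fin N) (m : ℕ) (n : ℤ) :
    (tshift^[m] ω) n = ω (n + m) := by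
  induction m generalizing ω with
  | zero => simp
  | succ m ih =>
    rw [iterate_succ_apply, ih]
    simp only [tshift, Nat.cast_succ, add_assoc]

lemma rightSeq_tshift_iterate_comp_toNat {N : ℕ} (ω : ℕ → Fin N) (m : ℕ) :
    rightSeq (tshift^[m] (ω ∘ Int.toNat)) = oshift^[m] ω := by
  funext n
  simp only [rightSeq, tshift_iterate_apply, oshift_iterate_apply, comp_apply]
  rw [← Nat.cast_add, Int.toNat_natCast]

theorem exists_biLt_of_exists_lexLt {N L : ℕ} (π : Equiv.Perm (Fin L))
    (h : ∃ ω : ℕ → Fin N, ∀ i j : Fin L, i < j →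
        lexLt (oshift^[(π i : ℕ)] ω) (oshift^[(π j : ℕ)] ω)) :
    ∃ ω : ℤ → Fin N, ∀ i j : Fin L, i < j →
        biLt (tshift^[(π i : ℕ)] ω) (tshift^[(π j : ℕ)] ω) := by
  obtain ⟨ω, hω⟩ := h
  refine ⟨ω ∘ Int.toNat, fun i j hij => Or.inl ?_⟩
  simpa only [rightSeq_tshift_iterate_comp_toNat] using hω i j hij

section Itinerary

variable {α : Type*} [LinearOrder α] {N : ℕ} (f : α → α) (c : α → Fin N)

lemma iterate_lt_iterate_of_code_eq (hf : ∀ x y, x < y → c x = c y → f x < f y)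
    {x y : α} (hxy : x < y) (n : ℕ) (hcode : ∀ k < n, c (f^[k] x) = c (f^[k] y)) :
    f^[n] x < f^[n] y := by
  induction n with
  | zero => exact hxy
  | succ n ih =>
    rw [iterate_succ_apply', iterate_succ_apply']
    exact hf _ _ (ih fun k hk => hcode k (by omega)) (hcode n n.lt_succ_self)

lemma lexLt_itinerary (hc : Monotone c) (hf : ∀ x y, x < y → c x = c y → f x < f y)
    {x y : α} (hxy : x < y) (hne : ∃ n, c (f^[n] x) ≠ c (f^[n] y)) :
    lexLt (fun n => c (f^[n] x)) (fun n => c (f^[n] y)) := by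
  have hagree : ∀ k < Nat.find hne, c (f^[k] x) = c (f^[k] y) := fun k hk =>
    not_not.mp (Nat.find_min hne hk)
  refine ⟨Nat.find hne, hagree, lt_of_le_of_ne ?_ (Nat.find_spec hne)⟩
  exact hc (iterate_lt_iterate_of_code_eq f c hf hxy _ hagree).le

lemma exists_code_iterate_ne [Finite α] (hf : ∀ x y, x < y → c x = c y → f x < f y)
    {x : α} {d : ℕ} (hx : x < f^[d] x) : ∃ n, c (f^[n] x) ≠ c (f^[n] (f^[d] x)) := by
  by_contra! hcode
  have hmono : StrictMono fun k => f^[k * d] x := by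
    refine strictMono_nat_of_lt_succ fun k => ?_
    rw [Nat.succ_mul, iterate_add_apply]
    exact iterate_lt_iterate_of_code_eq f c hf hx _ fun k _ => hcode k
  exact not_injective_infinite_finite _ hmono.injective

end Itinerary

section Descents

variable {n : ℕ} {β : Type*} [LinearOrder β] (f : Fin (n + 1) → β)

def descents : Finset (Fin n) := {j | f j.succ < f j.castSucc}

def descentCount (r : Fin (n + 1)) : ℕ := #{j ∈ descents f | j.castSucc < r}

lemma descentCount_le_card (r : Fin (n + 1)) : descentCount f r ≤ #(descents f) :=
  card_filter_le _ _

lemma descentCount_mono : Monotone (descentCount f) := fun _ _ hrs =>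
  card_le_card (monotone_filter_right _ fun _ _ h => lt_of_lt_of_le h hrs)

lemma le_of_forall_notMem_descents {r s : Fin (n + 1)} (hrs : r ≤ s)
    (h : ∀ j : Fin n, r ≤ j.castSucc → j.castSucc < s → j ∉ descents f) :
    f r ≤ f s := by
  induction s using Fin.induction with
  | zero => rw [nonpos_iff_eq_zero.mp hrs]
  | succ j ih =>
    rcases hrs.eq_or_lt with rfl | hrj
    · rfl
    have hrj : r ≤ j.castSucc := Fin.le_castSucc_iff.mpr hrj
    calc f r ≤ f j.castSucc :=
          ih hrj fun i hri his => h i hri (his.trans Fin.castSucc_lt_succ)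
      _ ≤ f j.succ := not_lt.mp fun hj => h j hrj Fin.castSucc_lt_succ (by simpa [descents])

lemma lt_of_descentCount_eq (hf : Injective f) {r s : Fin (n + 1)} (hrs : r < s)
    (h : descentCount f r = descentCount f s) : f r < f s := by
  refine lt_of_le_of_ne (le_of_forall_notMem_descents f hrs.le fun j hrj hjs hj => ?_)
    (hf.ne hrs.ne)
  have hsub : {i ∈ descents f | i.castSucc < r} ⊂ {i ∈ descents f | i.castSucc < s} :=
    (ssubset_iff_of_subset (monotone_filter_right _ fun _ _ hi => hi.trans hrs)).mpr
      ⟨j, mem_filter.mpr ⟨hj, hjs⟩, fun hmem => (mem_filter.mp hmem).2.not_ge hrj⟩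
  exact (card_lt_card hsub).ne h

lemma card_descents_lt_of_not_strictAnti (h : ¬ StrictAnti f) : #(descents f) < n := by
  obtain ⟨j, hj⟩ : ∃ j, j ∉ descents f := by
    by_contra! hall
    exact h (Fin.strictAnti_iff_succ_lt.mpr fun j => by simpa [descents] using hall j)
  simpa using card_lt_univ_of_notMem hj

end Descents

section RankSucc

variable {n : ℕ} (π : Equiv.Perm (Fin (n + 1)))

/-- `π` sends a rank to a time; this is the rank of the next time, modulo `n + 1`. -/
def rankSucc (r : Fin (n + 1)) : Fin (n + 1) := π.symm (π r + 1)

lemma rankSucc_injective : Injective (rankSucc π) := fun r s h => by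
  simpa [rankSucc] using h

lemma rankSucc_iterate (k : ℕ) (r : Fin (n + 1)) : (rankSucc π)^[k] r = π.symm (π r + k) := by
  induction k with
  | zero => simp
  | succ k ih =>
    rw [iterate_succ_apply', ih, rankSucc, Equiv.apply_symm_apply, Nat.cast_succ, add_assoc]

lemma not_strictAnti_rankSucc (hn : 2 ≤ n) : ¬ StrictAnti (rankSucc π) := by
  intro h
  have h2 : (rankSucc π)^[2] (π.symm 0) = π.symm 0 := (StrictAnti.comp h h).apply_eq
  rw [rankSucc_iterate, Equiv.apply_symm_apply, zero_add, π.symm.apply_eq_iff_eq, Fin.ext_iff,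
    Fin.val_natCast, Fin.val_zero, Nat.mod_eq_of_lt (by omega)] at h2
  exact two_ne_zero h2

end RankSucc

theorem exists_lexLt_of_length_le_succ {N L : ℕ} (hN : 2 ≤ N) (hL : L ≤ N + 1)
    (π : Equiv.Perm (Fin L)) :
    ∃ ω : ℕ → Fin N, ∀ i j : Fin L, i < j →
      lexLt (oshift^[(π i : ℕ)] ω) (oshift^[(π j : ℕ)] ω) := by
  obtain _ | n := L
  · exact ⟨fun _ => ⟨0, by omega⟩, fun i => i.elim0⟩
  set σ := rankSucc π
  have hcard : #(descents σ) < N := by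
    rcases (show n ≤ N by omega).lt_or_eq with hn | rfl
    · exact (card_le_univ _).trans_lt (by simpa using hn)
    · exact card_descents_lt_of_not_strictAnti σ (not_strictAnti_rankSucc π hN)
  let c : Fin (n + 1) → Fin N := fun r =>
    ⟨descentCount σ r, (descentCount_le_card σ r).trans_lt hcard⟩
  have hc : Monotone c := fun r s h => Fin.mk_le_mk.mpr (descentCount_mono σ h)
  have hσ : ∀ x y, x < y → c x = c y → σ x < σ y := fun x y hxy hcxy =>
    lt_of_descentCount_eq σ (rankSucc_injective π) hxy (congrArg Fin.val hcxy)
  have hitinerary :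
      ∀ i, oshift^[(π i : ℕ)] (fun k : ℕ => c (π.symm k)) = fun m => c (σ^[m] i) := by
    intro i
    funext m
    rw [oshift_iterate_apply, rankSucc_iterate, Nat.cast_add, Fin.cast_val_eq_self,
      add_comm (m : Fin (n + 1))]
  refine ⟨fun k => c (π.symm k), fun i j hij => ?_⟩
  have hj : σ^[(π j - π i : Fin (n + 1))] i = j := by
    rw [rankSucc_iterate, Fin.cast_val_eq_self, add_sub_cancel, Equiv.symm_apply_apply]
  rw [hitinerary, hitinerary, ← hj]
  exact lexLt_itinerary σ c hc hσ (hij.trans_eq hj.symm)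
    (exists_code_iterate_ne σ c hσ (hij.trans_eq hj.symm))

/-- The two-sided shift on `N ≥ 2` symbols realizes every order pattern
realized by the one-sided shift on `N` symbols; in particular, it has no
forbidden patterns of length `L ≤ N + 1`. -/
theorem twosided_realizes (N : ℕ) (hN : 2 ≤ N) :
    (∀ L : ℕ, ∀ π : Equiv.Perm (Fin L),
      (∃ ω : ℕ → Fin N, ∀ i j : Fin L, i < j →
          lexLt (oshift^[(π i : ℕ)] ω) (oshift^[(π j : ℕ)] ω)) →
      (∃ ω : ℤ → Fin N, ∀ i j : Fin L, i < j →
          biLt (tshift^[(π i : ℕ)] ω) (tshift^[(π j : ℕ)] ω))) ∧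
    (∀ L : ℕ, L ≤ N + 1 → ∀ π : Equiv.Perm (Fin L),
      ∃ ω : ℤ → Fin N, ∀ i j : Fin L, i < j →
        biLt (tshift^[(π i : ℕ)] ω) (tshift^[(π j : ℕ)] ω)) :=
  ⟨fun _ π => exists_biLt_of_exists_lexLt π,
    fun _ hL π => exists_biLt_of_exists_lexLt π (exists_lexLt_of_length_le_succ hN hL π)⟩
end
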